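/- Let A be a Hopf algebra, B a left coideal subalgebra, and R a right ideal of B⁺ with Δ̄(R) ⊆ Ā ⊗ R. Then Γ(δ_R) is contained in the cotensor product A □_Ā (B⁺/R), i.e., for all a, b ∈ B, the element a b₍₁₎ ⊗ p(b₍₂₎⁺) satisfies the cotensor compatibility condition a b₍₁₎ ⊗ π(b₍₂₎) ⊗ p(b₍₃₎⁺) = a₍₁₎ b₍₁₎ ⊗ π(a₍₂₎ b₍₂₎) ⊗ p(b₍₃₎⁺). -/

import Mathlib

/-! For `s ∈ B` the element `s - ε(s)` lies in `B⁺`, so `π(s x) = ε(s) π(x)` for all `x ∈ A`.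
Hence the right-hand side equals `Σ a₍₁₎ ε(a₍₂₎) b₍₁₎ ⊗ π(b₍₂₎) ⊗ p(b₍₃₎⁺)`, which is the
left-hand side by counitality. -/

open TensorProduct

noncomputable section

variable (A : Type) [Ring A] [HopfAlgebra ℂ A] (B : Subalgebra ℂ A)

/-- The counit of `A` restricted to `B`. -/
def epsB : ↥B →ₐ[ℂ] ℂ := (Bialgebra.counitAlgHom ℂ A).comp B.val

/-- `B⁺ = B ∩ ker ε`. -/
def Bplus : Submodule ℂ ↥B := LinearMap.ker (epsB A B).toLinearMap

/-- `b ↦ b⁺ = b − ε(b)1`. -/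
def plusB : ↥B →ₗ[ℂ] ↥B :=
  LinearMap.id - (Algebra.linearMap ℂ ↥B).comp (epsB A B).toLinearMap

lemma plusB_mem (b : ↥B) : plusB A B b ∈ Bplus A B := by
  simp [plusB, Bplus, epsB, Algebra.algebraMap_eq_smul_one]

/-- `b ↦ b⁺` viewed as a map into `B⁺`. -/
def plusBc : ↥B →ₗ[ℂ] ↥(Bplus A B) :=
  (plusB A B).codRestrict (Bplus A B) (plusB_mem A B)

/-- The right ideal `B⁺A` of `A`. -/
def BplusA : Submodule ℂ A :=
  Submodule.span ℂ {x : A | ∃ b : ↥B, epsB A B b = 0 ∧ ∃ a : A, x = (b : A) * a}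

/-- `Δ̄ = (π ⊗ id)∘Δ`. -/
def DeltaBar : A →ₗ[ℂ] (A ⧸ BplusA A B) ⊗[ℂ] A :=
  (TensorProduct.map (BplusA A B).mkQ LinearMap.id) ∘ₗ Coalgebra.comul

/-- `Ā ⊗ N` as a submodule of `Ā ⊗ A`. -/
def AbarOx (N : Submodule ℂ A) : Submodule ℂ ((A ⧸ BplusA A B) ⊗[ℂ] A) :=
  LinearMap.range (TensorProduct.map
    (LinearMap.id : (A ⧸ BplusA A B) →ₗ[ℂ] (A ⧸ BplusA A B)) N.subtype)

lemma Coalgebra.list_sum_counit_smul_eq {R C M : Type*} [CommSemiring R] [AddCommMonoid C]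
    [Module R C] [Coalgebra R C] [AddCommMonoid M] [Module R M] (f : M →ₗ[R] C) {c : C}
    (L : List (C × M)) (hL : (L.map fun s => s.1 ⊗ₜ[R] f s.2).sum = Coalgebra.comul c) :
    (L.map fun s => Coalgebra.counit (R := R) (f s.2) • s.1).sum = c := by
  have := congr(_root_.TensorProduct.rid R C (counit.lTensor C $hL))
  simpa [map_list_sum, List.map_map, Function.comp_def] using this

lemma List.sum_map_sum_mul_tmul {R A M ι κ : Type*} [CommSemiring R]
    [NonUnitalNonAssocSemiring A] [Module R A] [AddCommMonoid M] [Module R M]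
    (ys : List ι) (f : ι → A) (xs : List κ) (g : κ → A) (h : κ → M) :
    (xs.map fun t => ((ys.map f).sum * g t) ⊗ₜ[R] h t).sum
      = (ys.map fun i => (xs.map fun t => (f i * g t) ⊗ₜ[R] h t).sum).sum := by
  induction ys with
  | nil => simp
  | cons i ys ih => simp [add_mul, add_tmul, List.sum_map_add, ih]

lemma BplusA_mkQ_coe_mul (s : ↥B) (t : A) :
    (BplusA A B).mkQ ((s : A) * t) = Coalgebra.counit (R := ℂ) (s : A) • (BplusA A B).mkQ t := by
  rw [← map_smul, Submodule.mkQ_apply, Submodule.mkQ_apply, Submodule.Quotient.eq]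
  refine Submodule.subset_span ⟨s - epsB A B s • 1, by simp, t, ?_⟩
  simp [epsB, sub_mul]

theorem cotensor_compatibility_of_Gamma_deltaR
    (comulB : ↥B →ₗ[ℂ] A ⊗[ℂ] ↥B)
    (hcomulB : ∀ b : ↥B,
      (TensorProduct.map LinearMap.id B.val.toLinearMap) (comulB b)
        = Coalgebra.comul (b : A))
    (R : Submodule ℂ ↥B)
    (a b : ↥B)
    -- a finite representation `Σ b₍₁₎ ⊗ b₍₂₎ ⊗ b₍₃₎` of the twofold coproduct:
    (Lb : List (A × A × ↥B))
    -- a finite representation `Σ a₍₁₎ ⊗ a₍₂₎` of `Δ(a)`: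
    (La : List (A × ↥B))
    (hLa : (La.map fun s => s.1 ⊗ₜ[ℂ] s.2).sum = comulB a) :
    let Q := ↥(Bplus A B) ⧸ (R.comap (Bplus A B).subtype)
    let pQ : ↥B →ₗ[ℂ] Q := (R.comap (Bplus A B).subtype).mkQ ∘ₗ plusBc A B
    let π : A →ₗ[ℂ] A ⧸ BplusA A B := (BplusA A B).mkQ
    (Lb.map fun t =>
      ((a : A) * t.1) ⊗ₜ[ℂ] (π t.2.1 ⊗ₜ[ℂ] pQ t.2.2)).sum
    = (La.map fun s =>
        (Lb.map fun t =>
          (s.1 * t.1) ⊗ₜ[ℂ] (π ((s.2 : A) * t.2.1) ⊗ₜ[ℂ] pQ t.2.2)).sum).sum := by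
  intro Q pQ π
  have ha : (La.map fun s => Coalgebra.counit (R := ℂ) (s.2 : A) • s.1).sum = a := by
    refine Coalgebra.list_sum_counit_smul_eq B.val.toLinearMap La ?_
    rw [← hcomulB, ← hLa, map_list_sum, List.map_map]
    rfl
  rw [← ha, List.sum_map_sum_mul_tmul]
  refine congrArg List.sum (List.map_congr_left fun s _ =>
    congrArg List.sum (List.map_congr_left fun t _ => ?_))
  rw [BplusA_mkQ_coe_mul, smul_mul_assoc, smul_tmul, smul_tmul']

end
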